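/- Let T be a trail of a k-register SRT and define P^T_{i,j} as the set of step indices n (including the sentinel −1 for the initial value) at which register j receives a 'new' or 'add' update and after which (up to step i) register j is never reset with 'new'. Then for any run with corresponding trail T over input s, the value of register j after step i equals the sum over e ∈ P^T_{i,j} of (the initial value R_0[j] if e = −1, else the input data value s[e]). -/

import Mathlib

/-!
Fix a register. An `add` at step `n` keeps every earlier contribution and appends `s n`, an
`old` changes nothing, and a `new` at step `n` discards every earlier contribution (including
the initial value) and starts afresh with `s n`. Hence the trail sum restricted to the first `m`
steps obeys the same recursion as the register, and the two agree by induction on `m`.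
-/

/-- Register update instructions of an SRT trail. -/
inductive Upd where
  | old | new | add
deriving DecidableEq

open scoped Classical

open Finset

namespace Upd

def apply {D : Type*} [Add D] : Upd → D → D → D
  | old, r, _ => r
  | new, _, x => x
  | add, r, x => r + x

end Upd

section TrailSum

variable {D : Type*} [AddCommMonoid D] (u : ℕ → Upd) (s : ℕ → D) (x₀ : D)

/-- The paper's sum over `P^T_{m-1,j}` for a single register with updates `u`: it describes the
value after the first `m` steps, and the sentinel `-1` contributes the `x₀` summand. -/
def trailSum (m : ℕ) : D :=
  (if ∀ n ∈ range m, u n ≠ Upd.new then x₀ else 0) +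
    ∑ n ∈ range m,
      if (u n = Upd.new ∨ u n = Upd.add) ∧ ∀ n' ∈ Ioo n m, u n' ≠ Upd.new then s n else 0

@[simp]
theorem trailSum_zero : trailSum u s x₀ 0 = x₀ := by
  simp [trailSum]

theorem trailSum_succ_of_new {m : ℕ} (hm : u m = Upd.new) :
    trailSum u s x₀ (m + 1) = s m := by
  have reset : ∀ n ∈ range m, m ∈ Ioo n (m + 1) := fun n hn ↦ by simpa using hn
  rw [trailSum, sum_range_succ, if_neg fun h ↦ h m (self_mem_range_succ m) hm,
    if_pos ⟨Or.inl hm, by simp⟩, zero_add, sum_eq_zero fun n hn ↦ ?_, zero_add]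
  exact if_neg fun ⟨_, h⟩ ↦ h m (reset n hn) hm

theorem trailSum_succ_of_ne_new {m : ℕ} (hm : u m ≠ Upd.new) :
    trailSum u s x₀ (m + 1) =
      trailSum u s x₀ m + if u m = Upd.add then s m else 0 := by
  have initial : (∀ n ∈ range (m + 1), u n ≠ Upd.new) ↔ ∀ n ∈ range m, u n ≠ Upd.new := by
    simp [range_add_one, hm]
  have later (n) (hn : n ∈ range m) :
      (∀ n' ∈ Ioo n (m + 1), u n' ≠ Upd.new) ↔ ∀ n' ∈ Ioo n m, u n' ≠ Upd.new := by
    rw [Ioo_add_one_right_eq_Ioc, ← Ioo_insert_right (mem_range.mp hn)]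
    simp [hm]
  have last : ((u m = Upd.new ∨ u m = Upd.add) ∧ ∀ n' ∈ Ioo m (m + 1), u n' ≠ Upd.new) ↔
      u m = Upd.add := by
    simp [hm]
  rw [trailSum, trailSum, sum_range_succ, if_congr last rfl rfl, if_congr initial rfl rfl,
    add_assoc, sum_congr rfl fun n hn ↦ if_congr (and_congr_right' (later n hn)) rfl rfl]

theorem trailSum_succ (m : ℕ) :
    trailSum u s x₀ (m + 1) = (u m).apply (trailSum u s x₀ m) (s m) := by
  cases hm : u m with
  | old => simp [trailSum_succ_of_ne_new u s x₀ (m := m) (by simp [hm]), hm, Upd.apply]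
  | new => simp [trailSum_succ_of_new u s x₀ hm, Upd.apply]
  | add => simp [trailSum_succ_of_ne_new u s x₀ (m := m) (by simp [hm]), hm, Upd.apply]

theorem eq_trailSum_of_step {r : ℕ → D} (hr : ∀ n, r (n + 1) = (u n).apply (r n) (s n))
    (m : ℕ) : r m = trailSum u s (r 0) m := by
  induction m with
  | zero => simp
  | succ m ih => rw [hr, ih, trailSum_succ]

end TrailSum

/-- The value of register `j` after steps `0..i` equals the sum, over the set
`P^T_{i,j}` of contributing positions, of the corresponding input data values —
together with the initial value `R₀ j` when the sentinel `-1` belongs to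
`P^T_{i,j}` (i.e. register `j` is never reset with `new` during steps `0..i`). -/
theorem srt_register_value_eq_trail_sum
    {D : Type*} [AddCommGroup D] {k : ℕ}
    (upd : ℕ → Fin k → Upd) (s : ℕ → D) (R0 : Fin k → D) (R : ℕ → Fin k → D)
    (h0 : R 0 = R0)
    (hstep : ∀ i j, R (i + 1) j =
      match upd i j with
      | .old => R i j
      | .new => s i
      | .add => R i j + s i) :
    ∀ (i : ℕ) (j : Fin k),
      R (i + 1) j =
        (if ∀ n ∈ Finset.range (i + 1), upd n j ≠ Upd.new then R0 j else 0) +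
        ∑ n ∈ Finset.range (i + 1),
          if (upd n j = Upd.new ∨ upd n j = Upd.add) ∧
             (∀ n' ∈ Finset.Ioc n i, upd n' j ≠ Upd.new)
          then s n else 0 := by
  intro i j
  have hr (n : ℕ) : R (n + 1) j = (upd n j).apply (R n j) (s n) := by
    rw [hstep]
    cases upd n j <;> rfl
  rw [eq_trailSum_of_step (fun n ↦ upd n j) s (r := (R · j)) hr, h0, trailSum]
  simp only [Ioo_add_one_right_eq_Ioc]
  -- the two sides now differ only in their `Decidable` instances
  congr!
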